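/- Given a universe lifting facility, for every simple type expression s built from base types (variables) and the arrow constructor there exist functions Up_s : ⟦s⟧ → ⟦UpType s⟧ and Down_s : ⟦UpType s⟧ → ⟦s⟧ satisfying the bijectivity conditions Up_s ∘ Down_s = id and Down_s ∘ Up_s = id, and the congruence condition: for all f : ⟦α → β⟧ and x : ⟦α⟧, Up_β (f x) = (Up_{α→β} f) (Up_α x). Here UpType is defined recursively by UpType a = GLift a for a base type a, and UpType (α → β) = UpType α → UpType β. -/

import Mathlib

namespace LeanAuto

/-- A universe lifting facility: `GLift α` wraps a value of `α : Sort u` into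
`Sort (max u (v + 1))`.  The maps `GLift.up : α → GLift α` and
`GLift.down : GLift α → α` are mutually inverse (the bijectivity conditions
hold definitionally for this one-field structure). -/
structure GLift.{u, v} (α : Sort u) : Sort (max u (v + 1)) where
  /-- Lift a value into `GLift α` -/
  up ::
  /-- Extract a value from `GLift α` -/
  down : α

/-- Simple type expressions, built from base types (variables from `ν`) and
the arrow constructor. -/
inductive STy (ν : Type) : Type where
  | base : ν → STy ν
  | arrow : STy ν → STy ν → STy ν

/-- The interpretation `⟦s⟧` of a simple type expression: each base type
variable is interpreted by `I`, and the arrow constructor is interpreted as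
the function type. -/
def STy.interp.{u} {ν : Type} (I : ν → Sort u) : STy ν → Sort u
  | .base a => I a
  | .arrow s t => s.interp I → t.interp I

/-- The interpretation `⟦UpType s⟧`, where `UpType` is defined recursively by
`UpType a = GLift a` for a base type `a` and
`UpType (α → β) = UpType α → UpType β`. -/
def STy.upInterp.{u, v} {ν : Type} (I : ν → Sort u) : STy ν → Sort (max u (v + 1))
  | .base a => GLift.{u, v} (I a)
  | .arrow s t => s.upInterp I → t.upInterp I

/-! `Up` and `Down` are the two directions of an equivalence `⟦s⟧ ≃ ⟦UpType s⟧` built by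
recursion on `s`: `GLift.up` at base types and conjugation `f ↦ Up_β ∘ f ∘ Down_α` on arrows.
The congruence condition is then the arrow case evaluated at `Up_α x`, using `Down_α ∘ Up_α = id`. -/

def GLift.equiv.{u, v} (α : Sort u) : α ≃ GLift.{u, v} α :=
  ⟨GLift.up, GLift.down, fun _ => rfl, fun _ => rfl⟩

def STy.upEquiv.{u, v} {ν : Type} (I : ν → Sort u) : ∀ s : STy ν, s.interp I ≃ STy.upInterp.{u, v} I s
  | .base a => GLift.equiv (I a)
  | .arrow s t => Equiv.arrowCongr (s.upEquiv I) (t.upEquiv I)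

theorem Equiv.arrowCongr_apply_apply {α₁ β₁ α₂ β₂ : Sort*} (e₁ : α₁ ≃ α₂) (e₂ : β₁ ≃ β₂)
    (f : α₁ → β₁) (x : α₁) : e₁.arrowCongr e₂ f (e₁ x) = e₂ (f x) := by
  simp [Equiv.arrowCongr_apply]

theorem exists_up_down.{u, v} {ν : Type} (I : ν → Sort u) :
    ∃ (Up : ∀ s : STy ν, s.interp I → STy.upInterp.{u, v} I s)
      (Down : ∀ s : STy ν, STy.upInterp.{u, v} I s → s.interp I),
      (∀ (s : STy ν) (x : STy.upInterp.{u, v} I s), Up s (Down s x) = x) ∧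
      (∀ (s : STy ν) (x : s.interp I), Down s (Up s x) = x) ∧
      (∀ (α β : STy ν) (f : (STy.arrow α β).interp I) (x : α.interp I),
        Up β (f x) = (Up (STy.arrow α β) f) (Up α x)) :=
  ⟨fun s => STy.upEquiv I s, fun s => (STy.upEquiv I s).symm,
    fun s => (STy.upEquiv I s).apply_symm_apply, fun s => (STy.upEquiv I s).symm_apply_apply,
    fun α β f x => (Equiv.arrowCongr_apply_apply (α.upEquiv I) (β.upEquiv I) f x).symm⟩

end LeanAuto
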